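/- arXiv:1811.04923 — 2 statements merged into one kernel-verified Lean document; each statement's English description precedes it below -/
import Mathlib

section
/- Every 3×3 base-B lunar magic square is the entrywise lunar sum of single-digit-position magic squares: if M is a base-B lunar magic square whose entries all have at most k base-B digits, then M equals the entrywise lunar sum, over d = 0, 1, ..., k−1, of the matrices M_d whose (i,j) entry is (the d-th base-B digit of M i j) · B^d, and each M_d is itself a base-B lunar magic square. -/
/-- The `d`-th base-`B` digit of `n` (position 0 is the least significant digit). -/
def lunarDigit (B n d : ℕ) : ℕ := n / B ^ d % B

/-- Base-`B` lunar addition: the `d`-th digit of `x ⊕ y` is the maximum of the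
`d`-th digits of `x` and `y` (no carries). -/
def lunarAdd (B x y : ℕ) : ℕ :=
  ∑ d ∈ Finset.range (x + y + 1), max (lunarDigit B x d) (lunarDigit B y d) * B ^ d

/-- Base-`B` lunar multiplication: the `d`-th digit of `x ⊗ y` is the maximum over
`j + k = d` of the minimum of the `j`-th digit of `x` and the `k`-th digit of `y`. -/
def lunarMul (B x y : ℕ) : ℕ :=
  ∑ d ∈ Finset.range (x + y + 1),
    ((Finset.range (d + 1)).sup fun j => min (lunarDigit B x j) (lunarDigit B y (d - j))) * B ^ d

/-- `M` is a 3×3 base-`B` lunar magic square with total `T`: the lunar sums of the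
three rows, the three columns, and the two diagonals all equal `T`. -/
def IsLunarMagic (B : ℕ) (M : Fin 3 → Fin 3 → ℕ) (T : ℕ) : Prop :=
  (∀ i, lunarAdd B (lunarAdd B (M i 0) (M i 1)) (M i 2) = T) ∧
  (∀ j, lunarAdd B (lunarAdd B (M 0 j) (M 1 j)) (M 2 j) = T) ∧
  lunarAdd B (lunarAdd B (M 0 0) (M 1 1)) (M 2 2) = T ∧
  lunarAdd B (lunarAdd B (M 0 2) (M 1 1)) (M 2 0) = T

/-- The nine entries of `M` are pairwise distinct. -/
def DistinctEntries (M : Fin 3 → Fin 3 → ℕ) : Prop :=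
  ∀ i j i' j', M i j = M i' j' → i = i' ∧ j = j'

/-!
Lunar addition acts on each digit separately, as a maximum, and a natural number is determined
by its digits. So a magic square splits into independent digit positions: the `d`-th digits of
the rows, columns and diagonals have the `d`-th digit of the total as their maximum, and the
lunar sum of all digit slices of an entry has the same digits as the entry.
-/

section LunarDigit

variable {B : ℕ}

lemma lunarDigit_lt (hB : 0 < B) (n e : ℕ) : lunarDigit B n e < B := Nat.mod_lt _ hB

lemma lunarDigit_zero_left (B e : ℕ) : lunarDigit B 0 e = 0 := by simp [lunarDigit]

lemma lunarDigit_succ (B n e : ℕ) : lunarDigit B n (e + 1) = lunarDigit B (n / B) e := by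
  simp [lunarDigit, pow_succ', Nat.div_div_eq_div_mul]

lemma lunarDigit_add_mul_zero {c : ℕ} (hc : c < B) (n : ℕ) :
    lunarDigit B (c + B * n) 0 = c := by
  simp [lunarDigit, Nat.mod_eq_of_lt hc]

lemma lunarDigit_add_mul_succ {c : ℕ} (hc : c < B) (n e : ℕ) :
    lunarDigit B (c + B * n) (e + 1) = lunarDigit B n e := by
  rw [lunarDigit_succ, Nat.add_mul_div_left _ _ (by omega), Nat.div_eq_of_lt hc, zero_add]

lemma lunarDigit_eq_zero_of_lt {n e : ℕ} (h : n < B ^ e) : lunarDigit B n e = 0 := by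
  simp [lunarDigit, Nat.div_eq_of_lt h]

lemma lunarDigit_eq_zero_of_le (hB : 1 < B) {n e : ℕ} (h : n ≤ e) : lunarDigit B n e = 0 :=
  lunarDigit_eq_zero_of_lt ((Nat.lt_pow_self hB).trans_le (Nat.pow_le_pow_right (by omega) h))

lemma lunarDigit_mul_pow {c : ℕ} (hc : c < B) (d e : ℕ) :
    lunarDigit B (c * B ^ d) e = if e = d then c else 0 := by
  induction d generalizing e with
  | zero =>
    rw [pow_zero, mul_one, ← add_zero c, ← mul_zero B]
    cases e with
    | zero => rw [lunarDigit_add_mul_zero hc]; simp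
    | succ e => rw [lunarDigit_add_mul_succ hc, lunarDigit_zero_left]; simp
  | succ d ih =>
    have hB : 0 < B := by omega
    rw [pow_succ', mul_left_comm, ← zero_add (B * _)]
    cases e with
    | zero => rw [lunarDigit_add_mul_zero hB]; simp
    | succ e => rw [lunarDigit_add_mul_succ hB, ih]; simp

lemma lunarDigit_sum_mul_pow {f : ℕ → ℕ} (hf : ∀ d, f d < B) (N e : ℕ) :
    lunarDigit B (∑ d ∈ Finset.range N, f d * B ^ d) e = if e < N then f e else 0 := by
  induction N generalizing f e with
  | zero => simp [lunarDigit_zero_left]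
  | succ N ih =>
    have hsplit : ∑ d ∈ Finset.range (N + 1), f d * B ^ d
        = f 0 + B * ∑ d ∈ Finset.range N, f (d + 1) * B ^ d := by
      rw [Finset.sum_range_succ', Finset.mul_sum, pow_zero, mul_one, add_comm]
      exact congrArg _ (Finset.sum_congr rfl fun d _ => by ring)
    rw [hsplit]
    cases e with
    | zero => simp [lunarDigit_add_mul_zero (hf 0)]
    | succ e => simp [lunarDigit_add_mul_succ (hf 0), ih fun d => hf (d + 1)]

lemma ext_lunarDigit (hB : 1 < B) {x y : ℕ} (h : ∀ e, lunarDigit B x e = lunarDigit B y e) :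
    x = y := by
  have hmod : ∀ n, x % B ^ n = y % B ^ n := by
    intro n
    induction n with
    | zero => simp [Nat.mod_one]
    | succ n ih =>
      have hn : x / B ^ n % B = y / B ^ n % B := h n
      rw [Nat.mod_pow_succ, Nat.mod_pow_succ, ih, hn]
  have hlt : ∀ n ≤ x + y, n < B ^ (x + y) :=
    fun n hn => (Nat.lt_pow_self hB).trans_le (Nat.pow_le_pow_right (by omega) hn)
  calc x = x % B ^ (x + y) := (Nat.mod_eq_of_lt (hlt x (by omega))).symm
    _ = y % B ^ (x + y) := hmod _
    _ = y := Nat.mod_eq_of_lt (hlt y (by omega))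

lemma lunarDigit_lunarAdd (hB : 1 < B) (x y e : ℕ) :
    lunarDigit B (lunarAdd B x y) e = max (lunarDigit B x e) (lunarDigit B y e) := by
  have hB₀ : 0 < B := by omega
  rw [lunarAdd,
    lunarDigit_sum_mul_pow fun d => max_lt (lunarDigit_lt hB₀ x d) (lunarDigit_lt hB₀ y d)]
  split_ifs with he
  · rfl
  · rw [lunarDigit_eq_zero_of_le hB (by omega), lunarDigit_eq_zero_of_le hB (by omega), max_self]

lemma lunarDigit_foldr_lunarAdd (hB : 1 < B) (L : List ℕ) (b e : ℕ) :
    lunarDigit B (L.foldr (lunarAdd B) b) e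
      = (L.map (lunarDigit B · e)).foldr max (lunarDigit B b e) := by
  induction L with
  | nil => rfl
  | cons x L ih => simp [lunarDigit_lunarAdd hB, ih]

end LunarDigit

lemma foldr_max_map_ite_eq (l : List ℕ) (c : ℕ → ℕ) (e : ℕ) :
    (l.map fun d => if e = d then c d else 0).foldr max 0 = if e ∈ l then c e else 0 := by
  induction l with
  | nil => simp
  | cons a l ih =>
    simp only [List.map_cons, List.foldr_cons, ih, List.mem_cons]
    split_ifs <;> simp_all

theorem foldr_lunarAdd_digitSlices {B n k : ℕ} (hB : 1 < B) (hn : n < B ^ k) :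
    ((List.range k).map fun d => lunarDigit B n d * B ^ d).foldr (lunarAdd B) 0 = n := by
  refine ext_lunarDigit hB fun e => ?_
  have hslice (d : ℕ) : lunarDigit B (lunarDigit B n d * B ^ d) e
      = if e = d then lunarDigit B n d else 0 :=
    lunarDigit_mul_pow (lunarDigit_lt (by omega) n d) d e
  rw [lunarDigit_foldr_lunarAdd hB, List.map_map, lunarDigit_zero_left]
  simp only [Function.comp_def, hslice]
  rw [foldr_max_map_ite_eq]
  split_ifs with he
  · rfl
  · rw [List.mem_range, not_lt] at he
    exact (lunarDigit_eq_zero_of_lt (hn.trans_le (Nat.pow_le_pow_right (by omega) he))).symm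

lemma lunarAdd_lunarAdd_digitSlice {B : ℕ} (hB : 1 < B) {a b c T : ℕ}
    (h : lunarAdd B (lunarAdd B a b) c = T) (d : ℕ) :
    lunarAdd B (lunarAdd B (lunarDigit B a d * B ^ d) (lunarDigit B b d * B ^ d))
      (lunarDigit B c d * B ^ d) = lunarDigit B T d * B ^ d := by
  have hB₀ : 0 < B := by omega
  have hT : lunarDigit B T d
      = max (max (lunarDigit B a d) (lunarDigit B b d)) (lunarDigit B c d) := by
    rw [← h, lunarDigit_lunarAdd hB, lunarDigit_lunarAdd hB]
  refine ext_lunarDigit hB fun e => ?_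
  simp only [lunarDigit_lunarAdd hB, lunarDigit_mul_pow (lunarDigit_lt hB₀ _ _)]
  split_ifs <;> simp [hT]

theorem IsLunarMagic.digitSlice {B : ℕ} (hB : 1 < B) {M : Fin 3 → Fin 3 → ℕ} {T : ℕ}
    (hM : IsLunarMagic B M T) (d : ℕ) :
    IsLunarMagic B (fun i j => lunarDigit B (M i j) d * B ^ d) (lunarDigit B T d * B ^ d) :=
  let ⟨hrow, hcol, hdiag, hanti⟩ := hM
  ⟨fun i => lunarAdd_lunarAdd_digitSlice hB (hrow i) d,
    fun j => lunarAdd_lunarAdd_digitSlice hB (hcol j) d,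
    lunarAdd_lunarAdd_digitSlice hB hdiag d, lunarAdd_lunarAdd_digitSlice hB hanti d⟩

theorem stmt_6 (B : ℕ) (hB : 2 ≤ B) (M : Fin 3 → Fin 3 → ℕ) (T k : ℕ)
    (hM : IsLunarMagic B M T) (hk : ∀ i j, M i j < B ^ k) :
    (∀ i j, M i j =
      ((List.range k).map fun d => lunarDigit B (M i j) d * B ^ d).foldr (lunarAdd B) 0) ∧
    ∀ d, IsLunarMagic B (fun i j => lunarDigit B (M i j) d * B ^ d)
      (lunarDigit B T d * B ^ d) :=
  ⟨fun i j => (foldr_lunarAdd_digitSlices hB (hk i j)).symm, hM.digitSlice hB⟩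
end

section
/- There exist two 3×3 base-10 lunar magic squares, each of whose entries are base-10 lunar squares, whose entrywise lunar sum is again a lunar magic square all of whose entries are base-10 lunar squares: the matrix of lunar squares of [[5789, 5778, 6778], [6678, 6789, 5689], [6788, 5678, 6689]] and the matrix of lunar squares of [[13458, 13348, 23348], [22348, 23458, 12458], [23448, 12348, 22458]] are both base-10 lunar magic squares, and their entrywise lunar sum is the matrix of lunar squares of [[15789, 15778, 26778], [26678, 26789, 15689], [26788, 15678, 26689]], which is also a base-10 lunar magic square. -/
/-- The base-`B` lunar square of `m`. -/
def lunarSq (B m : ℕ) : ℕ := lunarMul B m m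

lemma digit_eq_zero {B n d : ℕ} (h : n < B ^ d) : lunarDigit B n d = 0 := by
  simp [lunarDigit, Nat.div_eq_of_lt h]

lemma lunarAdd_eval (x y v : ℕ) (hx : x < 10^12) (hy : y < 10^12) (hxy : 11 ≤ x + y)
    (h : ∑ d ∈ Finset.range 12, max (lunarDigit 10 x d) (lunarDigit 10 y d) * 10^d = v) :
    lunarAdd 10 x y = v := by
  rw [← h, lunarAdd]
  refine (Finset.sum_subset (Finset.range_subset_range.mpr (by omega)) ?_).symm
  intro d hd hd'
  simp only [Finset.mem_range, not_lt] at hd'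
  have hx' : x < 10 ^ d := lt_of_lt_of_le hx (Nat.pow_le_pow_right (by norm_num) hd')
  have hy' : y < 10 ^ d := lt_of_lt_of_le hy (Nat.pow_le_pow_right (by norm_num) hd')
  simp [digit_eq_zero hx', digit_eq_zero hy']

lemma lunarSq_eval (m v : ℕ) (hm : m < 10^6) (hm' : 6 ≤ m)
    (h : ∑ d ∈ Finset.range 12,
      ((Finset.range (d + 1)).sup fun j => min (lunarDigit 10 m j) (lunarDigit 10 m (d - j))) * 10^d = v) :
    lunarSq 10 m = v := by
  rw [← h, lunarSq, lunarMul]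
  refine (Finset.sum_subset (Finset.range_subset_range.mpr (by omega)) ?_).symm
  intro d hd hd'
  simp only [Finset.mem_range, not_lt] at hd'
  have hsup : ((Finset.range (d + 1)).sup fun j => min (lunarDigit 10 m j) (lunarDigit 10 m (d - j))) = 0 := by
    refine Nat.eq_zero_of_le_zero (Finset.sup_le ?_)
    intro j hj
    rcases le_or_gt 6 j with hj6 | hj6
    · have : lunarDigit 10 m j = 0 :=
        digit_eq_zero (lt_of_lt_of_le hm (Nat.pow_le_pow_right (by norm_num) hj6))
      simp [this]
    · have : lunarDigit 10 m (d - j) = 0 :=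
        digit_eq_zero (lt_of_lt_of_le hm (Nat.pow_le_pow_right (by norm_num) (by omega)))
      simp [this]
  simp [hsup]


lemma sq_5789 : lunarSq 10 5789 = 5577889 :=
  lunarSq_eval _ _ (by norm_num) (by norm_num) (by decide)

lemma sq_5778 : lunarSq 10 5778 = 5577778 :=
  lunarSq_eval _ _ (by norm_num) (by norm_num) (by decide)

lemma sq_6778 : lunarSq 10 6778 = 6677778 :=
  lunarSq_eval _ _ (by norm_num) (by norm_num) (by decide)

lemma sq_6678 : lunarSq 10 6678 = 6666778 :=
  lunarSq_eval _ _ (by norm_num) (by norm_num) (by decide)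

lemma sq_6789 : lunarSq 10 6789 = 6677889 :=
  lunarSq_eval _ _ (by norm_num) (by norm_num) (by decide)

lemma sq_5689 : lunarSq 10 5689 = 5566889 :=
  lunarSq_eval _ _ (by norm_num) (by norm_num) (by decide)

lemma sq_6788 : lunarSq 10 6788 = 6677888 :=
  lunarSq_eval _ _ (by norm_num) (by norm_num) (by decide)

lemma sq_5678 : lunarSq 10 5678 = 5566778 :=
  lunarSq_eval _ _ (by norm_num) (by norm_num) (by decide)

lemma sq_6689 : lunarSq 10 6689 = 6666889 :=
  lunarSq_eval _ _ (by norm_num) (by norm_num) (by decide)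

lemma sq_13458 : lunarSq 10 13458 = 113344558 :=
  lunarSq_eval _ _ (by norm_num) (by norm_num) (by decide)

lemma sq_13348 : lunarSq 10 13348 = 113333448 :=
  lunarSq_eval _ _ (by norm_num) (by norm_num) (by decide)

lemma sq_23348 : lunarSq 10 23348 = 223333448 :=
  lunarSq_eval _ _ (by norm_num) (by norm_num) (by decide)

lemma sq_22348 : lunarSq 10 22348 = 222233448 :=
  lunarSq_eval _ _ (by norm_num) (by norm_num) (by decide)

lemma sq_23458 : lunarSq 10 23458 = 223344558 :=
  lunarSq_eval _ _ (by norm_num) (by norm_num) (by decide)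

lemma sq_12458 : lunarSq 10 12458 = 112244558 :=
  lunarSq_eval _ _ (by norm_num) (by norm_num) (by decide)

lemma sq_23448 : lunarSq 10 23448 = 223344448 :=
  lunarSq_eval _ _ (by norm_num) (by norm_num) (by decide)

lemma sq_12348 : lunarSq 10 12348 = 112233448 :=
  lunarSq_eval _ _ (by norm_num) (by norm_num) (by decide)

lemma sq_22458 : lunarSq 10 22458 = 222244558 :=
  lunarSq_eval _ _ (by norm_num) (by norm_num) (by decide)

lemma sq_15789 : lunarSq 10 15789 = 115577889 :=
  lunarSq_eval _ _ (by norm_num) (by norm_num) (by decide)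

lemma sq_15778 : lunarSq 10 15778 = 115577778 :=
  lunarSq_eval _ _ (by norm_num) (by norm_num) (by decide)

lemma sq_26778 : lunarSq 10 26778 = 226677778 :=
  lunarSq_eval _ _ (by norm_num) (by norm_num) (by decide)

lemma sq_26678 : lunarSq 10 26678 = 226666778 :=
  lunarSq_eval _ _ (by norm_num) (by norm_num) (by decide)

lemma sq_26789 : lunarSq 10 26789 = 226677889 :=
  lunarSq_eval _ _ (by norm_num) (by norm_num) (by decide)

lemma sq_15689 : lunarSq 10 15689 = 115566889 :=
  lunarSq_eval _ _ (by norm_num) (by norm_num) (by decide)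

lemma sq_26788 : lunarSq 10 26788 = 226677888 :=
  lunarSq_eval _ _ (by norm_num) (by norm_num) (by decide)

lemma sq_15678 : lunarSq 10 15678 = 115566778 :=
  lunarSq_eval _ _ (by norm_num) (by norm_num) (by decide)

lemma sq_26689 : lunarSq 10 26689 = 226666889 :=
  lunarSq_eval _ _ (by norm_num) (by norm_num) (by decide)

lemma ad_5577889_5577778 : lunarAdd 10 5577889 5577778 = 5577889 :=
  lunarAdd_eval _ _ _ (by norm_num) (by norm_num) (by norm_num) (by decide)

lemma ad_5577889_6677778 : lunarAdd 10 5577889 6677778 = 6677889 :=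
  lunarAdd_eval _ _ _ (by norm_num) (by norm_num) (by norm_num) (by decide)

lemma ad_6666778_6677889 : lunarAdd 10 6666778 6677889 = 6677889 :=
  lunarAdd_eval _ _ _ (by norm_num) (by norm_num) (by norm_num) (by decide)

lemma ad_6677889_5566889 : lunarAdd 10 6677889 5566889 = 6677889 :=
  lunarAdd_eval _ _ _ (by norm_num) (by norm_num) (by norm_num) (by decide)

lemma ad_6677888_5566778 : lunarAdd 10 6677888 5566778 = 6677888 :=
  lunarAdd_eval _ _ _ (by norm_num) (by norm_num) (by norm_num) (by decide)

lemma ad_6677888_6666889 : lunarAdd 10 6677888 6666889 = 6677889 :=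
  lunarAdd_eval _ _ _ (by norm_num) (by norm_num) (by norm_num) (by decide)

lemma ad_5577889_6666778 : lunarAdd 10 5577889 6666778 = 6677889 :=
  lunarAdd_eval _ _ _ (by norm_num) (by norm_num) (by norm_num) (by decide)

lemma ad_6677889_6677888 : lunarAdd 10 6677889 6677888 = 6677889 :=
  lunarAdd_eval _ _ _ (by norm_num) (by norm_num) (by norm_num) (by decide)

lemma ad_5577778_6677889 : lunarAdd 10 5577778 6677889 = 6677889 :=
  lunarAdd_eval _ _ _ (by norm_num) (by norm_num) (by norm_num) (by decide)

lemma ad_6677889_5566778 : lunarAdd 10 6677889 5566778 = 6677889 :=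
  lunarAdd_eval _ _ _ (by norm_num) (by norm_num) (by norm_num) (by decide)

lemma ad_6677778_5566889 : lunarAdd 10 6677778 5566889 = 6677889 :=
  lunarAdd_eval _ _ _ (by norm_num) (by norm_num) (by norm_num) (by decide)

lemma ad_6677889_6666889 : lunarAdd 10 6677889 6666889 = 6677889 :=
  lunarAdd_eval _ _ _ (by norm_num) (by norm_num) (by norm_num) (by decide)

lemma ad_5577889_6677889 : lunarAdd 10 5577889 6677889 = 6677889 :=
  lunarAdd_eval _ _ _ (by norm_num) (by norm_num) (by norm_num) (by decide)

lemma ad_6677778_6677889 : lunarAdd 10 6677778 6677889 = 6677889 :=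
  lunarAdd_eval _ _ _ (by norm_num) (by norm_num) (by norm_num) (by decide)

lemma ad_113344558_113333448 : lunarAdd 10 113344558 113333448 = 113344558 :=
  lunarAdd_eval _ _ _ (by norm_num) (by norm_num) (by norm_num) (by decide)

lemma ad_113344558_223333448 : lunarAdd 10 113344558 223333448 = 223344558 :=
  lunarAdd_eval _ _ _ (by norm_num) (by norm_num) (by norm_num) (by decide)

lemma ad_222233448_223344558 : lunarAdd 10 222233448 223344558 = 223344558 :=
  lunarAdd_eval _ _ _ (by norm_num) (by norm_num) (by norm_num) (by decide)

lemma ad_223344558_112244558 : lunarAdd 10 223344558 112244558 = 223344558 :=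
  lunarAdd_eval _ _ _ (by norm_num) (by norm_num) (by norm_num) (by decide)

lemma ad_223344448_112233448 : lunarAdd 10 223344448 112233448 = 223344448 :=
  lunarAdd_eval _ _ _ (by norm_num) (by norm_num) (by norm_num) (by decide)

lemma ad_223344448_222244558 : lunarAdd 10 223344448 222244558 = 223344558 :=
  lunarAdd_eval _ _ _ (by norm_num) (by norm_num) (by norm_num) (by decide)

lemma ad_113344558_222233448 : lunarAdd 10 113344558 222233448 = 223344558 :=
  lunarAdd_eval _ _ _ (by norm_num) (by norm_num) (by norm_num) (by decide)

lemma ad_223344558_223344448 : lunarAdd 10 223344558 223344448 = 223344558 :=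
  lunarAdd_eval _ _ _ (by norm_num) (by norm_num) (by norm_num) (by decide)

lemma ad_113333448_223344558 : lunarAdd 10 113333448 223344558 = 223344558 :=
  lunarAdd_eval _ _ _ (by norm_num) (by norm_num) (by norm_num) (by decide)

lemma ad_223344558_112233448 : lunarAdd 10 223344558 112233448 = 223344558 :=
  lunarAdd_eval _ _ _ (by norm_num) (by norm_num) (by norm_num) (by decide)

lemma ad_223333448_112244558 : lunarAdd 10 223333448 112244558 = 223344558 :=
  lunarAdd_eval _ _ _ (by norm_num) (by norm_num) (by norm_num) (by decide)

lemma ad_223344558_222244558 : lunarAdd 10 223344558 222244558 = 223344558 :=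
  lunarAdd_eval _ _ _ (by norm_num) (by norm_num) (by norm_num) (by decide)

lemma ad_113344558_223344558 : lunarAdd 10 113344558 223344558 = 223344558 :=
  lunarAdd_eval _ _ _ (by norm_num) (by norm_num) (by norm_num) (by decide)

lemma ad_223333448_223344558 : lunarAdd 10 223333448 223344558 = 223344558 :=
  lunarAdd_eval _ _ _ (by norm_num) (by norm_num) (by norm_num) (by decide)

lemma ad_115577889_115577778 : lunarAdd 10 115577889 115577778 = 115577889 :=
  lunarAdd_eval _ _ _ (by norm_num) (by norm_num) (by norm_num) (by decide)

lemma ad_115577889_226677778 : lunarAdd 10 115577889 226677778 = 226677889 :=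
  lunarAdd_eval _ _ _ (by norm_num) (by norm_num) (by norm_num) (by decide)

lemma ad_226666778_226677889 : lunarAdd 10 226666778 226677889 = 226677889 :=
  lunarAdd_eval _ _ _ (by norm_num) (by norm_num) (by norm_num) (by decide)

lemma ad_226677889_115566889 : lunarAdd 10 226677889 115566889 = 226677889 :=
  lunarAdd_eval _ _ _ (by norm_num) (by norm_num) (by norm_num) (by decide)

lemma ad_226677888_115566778 : lunarAdd 10 226677888 115566778 = 226677888 :=
  lunarAdd_eval _ _ _ (by norm_num) (by norm_num) (by norm_num) (by decide)

lemma ad_226677888_226666889 : lunarAdd 10 226677888 226666889 = 226677889 :=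
  lunarAdd_eval _ _ _ (by norm_num) (by norm_num) (by norm_num) (by decide)

lemma ad_115577889_226666778 : lunarAdd 10 115577889 226666778 = 226677889 :=
  lunarAdd_eval _ _ _ (by norm_num) (by norm_num) (by norm_num) (by decide)

lemma ad_226677889_226677888 : lunarAdd 10 226677889 226677888 = 226677889 :=
  lunarAdd_eval _ _ _ (by norm_num) (by norm_num) (by norm_num) (by decide)

lemma ad_115577778_226677889 : lunarAdd 10 115577778 226677889 = 226677889 :=
  lunarAdd_eval _ _ _ (by norm_num) (by norm_num) (by norm_num) (by decide)

lemma ad_226677889_115566778 : lunarAdd 10 226677889 115566778 = 226677889 :=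
  lunarAdd_eval _ _ _ (by norm_num) (by norm_num) (by norm_num) (by decide)

lemma ad_226677778_115566889 : lunarAdd 10 226677778 115566889 = 226677889 :=
  lunarAdd_eval _ _ _ (by norm_num) (by norm_num) (by norm_num) (by decide)

lemma ad_226677889_226666889 : lunarAdd 10 226677889 226666889 = 226677889 :=
  lunarAdd_eval _ _ _ (by norm_num) (by norm_num) (by norm_num) (by decide)

lemma ad_115577889_226677889 : lunarAdd 10 115577889 226677889 = 226677889 :=
  lunarAdd_eval _ _ _ (by norm_num) (by norm_num) (by norm_num) (by decide)

lemma ad_226677778_226677889 : lunarAdd 10 226677778 226677889 = 226677889 :=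
  lunarAdd_eval _ _ _ (by norm_num) (by norm_num) (by norm_num) (by decide)

lemma ad_5577889_113344558 : lunarAdd 10 5577889 113344558 = 115577889 :=
  lunarAdd_eval _ _ _ (by norm_num) (by norm_num) (by norm_num) (by decide)

lemma ad_5577778_113333448 : lunarAdd 10 5577778 113333448 = 115577778 :=
  lunarAdd_eval _ _ _ (by norm_num) (by norm_num) (by norm_num) (by decide)

lemma ad_6677778_223333448 : lunarAdd 10 6677778 223333448 = 226677778 :=
  lunarAdd_eval _ _ _ (by norm_num) (by norm_num) (by norm_num) (by decide)

lemma ad_6666778_222233448 : lunarAdd 10 6666778 222233448 = 226666778 :=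
  lunarAdd_eval _ _ _ (by norm_num) (by norm_num) (by norm_num) (by decide)

lemma ad_6677889_223344558 : lunarAdd 10 6677889 223344558 = 226677889 :=
  lunarAdd_eval _ _ _ (by norm_num) (by norm_num) (by norm_num) (by decide)

lemma ad_5566889_112244558 : lunarAdd 10 5566889 112244558 = 115566889 :=
  lunarAdd_eval _ _ _ (by norm_num) (by norm_num) (by norm_num) (by decide)

lemma ad_6677888_223344448 : lunarAdd 10 6677888 223344448 = 226677888 :=
  lunarAdd_eval _ _ _ (by norm_num) (by norm_num) (by norm_num) (by decide)

lemma ad_5566778_112233448 : lunarAdd 10 5566778 112233448 = 115566778 :=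
  lunarAdd_eval _ _ _ (by norm_num) (by norm_num) (by norm_num) (by decide)

lemma ad_6666889_222244558 : lunarAdd 10 6666889 222244558 = 226666889 :=
  lunarAdd_eval _ _ _ (by norm_num) (by norm_num) (by norm_num) (by decide)

lemma mk_magic (M : Fin 3 → Fin 3 → ℕ) (T : ℕ)
    (h1 : lunarAdd 10 (lunarAdd 10 (M 0 0) (M 0 1)) (M 0 2) = T)
    (h2 : lunarAdd 10 (lunarAdd 10 (M 1 0) (M 1 1)) (M 1 2) = T)
    (h3 : lunarAdd 10 (lunarAdd 10 (M 2 0) (M 2 1)) (M 2 2) = T)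
    (h4 : lunarAdd 10 (lunarAdd 10 (M 0 0) (M 1 0)) (M 2 0) = T)
    (h5 : lunarAdd 10 (lunarAdd 10 (M 0 1) (M 1 1)) (M 2 1) = T)
    (h6 : lunarAdd 10 (lunarAdd 10 (M 0 2) (M 1 2)) (M 2 2) = T)
    (h7 : lunarAdd 10 (lunarAdd 10 (M 0 0) (M 1 1)) (M 2 2) = T)
    (h8 : lunarAdd 10 (lunarAdd 10 (M 0 2) (M 1 1)) (M 2 0) = T) :
    IsLunarMagic 10 M T :=
  ⟨fun i => by fin_cases i <;> [exact h1; exact h2; exact h3],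
   fun j => by fin_cases j <;> [exact h4; exact h5; exact h6], h7, h8⟩

theorem stmt_19 :
    (∃ T, IsLunarMagic 10 (fun i j => lunarSq 10
      (![![5789, 5778, 6778], ![6678, 6789, 5689], ![6788, 5678, 6689]] i j)) T) ∧
    (∃ T, IsLunarMagic 10 (fun i j => lunarSq 10
      (![![13458, 13348, 23348], ![22348, 23458, 12458], ![23448, 12348, 22458]] i j)) T) ∧
    (∀ i j, lunarAdd 10
        (lunarSq 10 (![![5789, 5778, 6778], ![6678, 6789, 5689], ![6788, 5678, 6689]] i j))
        (lunarSq 10 (![![13458, 13348, 23348], ![22348, 23458, 12458], ![23448, 12348, 22458]] i j))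
      = lunarSq 10 (![![15789, 15778, 26778], ![26678, 26789, 15689], ![26788, 15678, 26689]] i j)) ∧
    (∃ T, IsLunarMagic 10 (fun i j => lunarSq 10
      (![![15789, 15778, 26778], ![26678, 26789, 15689], ![26788, 15678, 26689]] i j)) T) := by
  refine ⟨⟨6677889, mk_magic _ _
    (show lunarAdd 10 (lunarAdd 10 (lunarSq 10 5789) (lunarSq 10 5778)) (lunarSq 10 6778) = 6677889 by
      rw [sq_5789, sq_5778, sq_6778, ad_5577889_5577778, ad_5577889_6677778])
    (show lunarAdd 10 (lunarAdd 10 (lunarSq 10 6678) (lunarSq 10 6789)) (lunarSq 10 5689) = 6677889 by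
      rw [sq_6678, sq_6789, sq_5689, ad_6666778_6677889, ad_6677889_5566889])
    (show lunarAdd 10 (lunarAdd 10 (lunarSq 10 6788) (lunarSq 10 5678)) (lunarSq 10 6689) = 6677889 by
      rw [sq_6788, sq_5678, sq_6689, ad_6677888_5566778, ad_6677888_6666889])
    (show lunarAdd 10 (lunarAdd 10 (lunarSq 10 5789) (lunarSq 10 6678)) (lunarSq 10 6788) = 6677889 by
      rw [sq_5789, sq_6678, sq_6788, ad_5577889_6666778, ad_6677889_6677888])
    (show lunarAdd 10 (lunarAdd 10 (lunarSq 10 5778) (lunarSq 10 6789)) (lunarSq 10 5678) = 6677889 by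
      rw [sq_5778, sq_6789, sq_5678, ad_5577778_6677889, ad_6677889_5566778])
    (show lunarAdd 10 (lunarAdd 10 (lunarSq 10 6778) (lunarSq 10 5689)) (lunarSq 10 6689) = 6677889 by
      rw [sq_6778, sq_5689, sq_6689, ad_6677778_5566889, ad_6677889_6666889])
    (show lunarAdd 10 (lunarAdd 10 (lunarSq 10 5789) (lunarSq 10 6789)) (lunarSq 10 6689) = 6677889 by
      rw [sq_5789, sq_6789, sq_6689, ad_5577889_6677889, ad_6677889_6666889])
    (show lunarAdd 10 (lunarAdd 10 (lunarSq 10 6778) (lunarSq 10 6789)) (lunarSq 10 6788) = 6677889 by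
      rw [sq_6778, sq_6789, sq_6788, ad_6677778_6677889, ad_6677889_6677888])⟩, ⟨223344558, mk_magic _ _
    (show lunarAdd 10 (lunarAdd 10 (lunarSq 10 13458) (lunarSq 10 13348)) (lunarSq 10 23348) = 223344558 by
      rw [sq_13458, sq_13348, sq_23348, ad_113344558_113333448, ad_113344558_223333448])
    (show lunarAdd 10 (lunarAdd 10 (lunarSq 10 22348) (lunarSq 10 23458)) (lunarSq 10 12458) = 223344558 by
      rw [sq_22348, sq_23458, sq_12458, ad_222233448_223344558, ad_223344558_112244558])
    (show lunarAdd 10 (lunarAdd 10 (lunarSq 10 23448) (lunarSq 10 12348)) (lunarSq 10 22458) = 223344558 by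
      rw [sq_23448, sq_12348, sq_22458, ad_223344448_112233448, ad_223344448_222244558])
    (show lunarAdd 10 (lunarAdd 10 (lunarSq 10 13458) (lunarSq 10 22348)) (lunarSq 10 23448) = 223344558 by
      rw [sq_13458, sq_22348, sq_23448, ad_113344558_222233448, ad_223344558_223344448])
    (show lunarAdd 10 (lunarAdd 10 (lunarSq 10 13348) (lunarSq 10 23458)) (lunarSq 10 12348) = 223344558 by
      rw [sq_13348, sq_23458, sq_12348, ad_113333448_223344558, ad_223344558_112233448])
    (show lunarAdd 10 (lunarAdd 10 (lunarSq 10 23348) (lunarSq 10 12458)) (lunarSq 10 22458) = 223344558 by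
      rw [sq_23348, sq_12458, sq_22458, ad_223333448_112244558, ad_223344558_222244558])
    (show lunarAdd 10 (lunarAdd 10 (lunarSq 10 13458) (lunarSq 10 23458)) (lunarSq 10 22458) = 223344558 by
      rw [sq_13458, sq_23458, sq_22458, ad_113344558_223344558, ad_223344558_222244558])
    (show lunarAdd 10 (lunarAdd 10 (lunarSq 10 23348) (lunarSq 10 23458)) (lunarSq 10 23448) = 223344558 by
      rw [sq_23348, sq_23458, sq_23448, ad_223333448_223344558, ad_223344558_223344448])⟩, ?_, ⟨226677889, mk_magic _ _
    (show lunarAdd 10 (lunarAdd 10 (lunarSq 10 15789) (lunarSq 10 15778)) (lunarSq 10 26778) = 226677889 by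
      rw [sq_15789, sq_15778, sq_26778, ad_115577889_115577778, ad_115577889_226677778])
    (show lunarAdd 10 (lunarAdd 10 (lunarSq 10 26678) (lunarSq 10 26789)) (lunarSq 10 15689) = 226677889 by
      rw [sq_26678, sq_26789, sq_15689, ad_226666778_226677889, ad_226677889_115566889])
    (show lunarAdd 10 (lunarAdd 10 (lunarSq 10 26788) (lunarSq 10 15678)) (lunarSq 10 26689) = 226677889 by
      rw [sq_26788, sq_15678, sq_26689, ad_226677888_115566778, ad_226677888_226666889])
    (show lunarAdd 10 (lunarAdd 10 (lunarSq 10 15789) (lunarSq 10 26678)) (lunarSq 10 26788) = 226677889 by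
      rw [sq_15789, sq_26678, sq_26788, ad_115577889_226666778, ad_226677889_226677888])
    (show lunarAdd 10 (lunarAdd 10 (lunarSq 10 15778) (lunarSq 10 26789)) (lunarSq 10 15678) = 226677889 by
      rw [sq_15778, sq_26789, sq_15678, ad_115577778_226677889, ad_226677889_115566778])
    (show lunarAdd 10 (lunarAdd 10 (lunarSq 10 26778) (lunarSq 10 15689)) (lunarSq 10 26689) = 226677889 by
      rw [sq_26778, sq_15689, sq_26689, ad_226677778_115566889, ad_226677889_226666889])
    (show lunarAdd 10 (lunarAdd 10 (lunarSq 10 15789) (lunarSq 10 26789)) (lunarSq 10 26689) = 226677889 by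
      rw [sq_15789, sq_26789, sq_26689, ad_115577889_226677889, ad_226677889_226666889])
    (show lunarAdd 10 (lunarAdd 10 (lunarSq 10 26778) (lunarSq 10 26789)) (lunarSq 10 26788) = 226677889 by
      rw [sq_26778, sq_26789, sq_26788, ad_226677778_226677889, ad_226677889_226677888])⟩⟩
  intro i j
  fin_cases i <;> fin_cases j
  · show lunarAdd 10 (lunarSq 10 5789) (lunarSq 10 13458) = lunarSq 10 15789
    rw [sq_5789, sq_13458, sq_15789, ad_5577889_113344558]
  · show lunarAdd 10 (lunarSq 10 5778) (lunarSq 10 13348) = lunarSq 10 15778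
    rw [sq_5778, sq_13348, sq_15778, ad_5577778_113333448]
  · show lunarAdd 10 (lunarSq 10 6778) (lunarSq 10 23348) = lunarSq 10 26778
    rw [sq_6778, sq_23348, sq_26778, ad_6677778_223333448]
  · show lunarAdd 10 (lunarSq 10 6678) (lunarSq 10 22348) = lunarSq 10 26678
    rw [sq_6678, sq_22348, sq_26678, ad_6666778_222233448]
  · show lunarAdd 10 (lunarSq 10 6789) (lunarSq 10 23458) = lunarSq 10 26789
    rw [sq_6789, sq_23458, sq_26789, ad_6677889_223344558]
  · show lunarAdd 10 (lunarSq 10 5689) (lunarSq 10 12458) = lunarSq 10 15689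
    rw [sq_5689, sq_12458, sq_15689, ad_5566889_112244558]
  · show lunarAdd 10 (lunarSq 10 6788) (lunarSq 10 23448) = lunarSq 10 26788
    rw [sq_6788, sq_23448, sq_26788, ad_6677888_223344448]
  · show lunarAdd 10 (lunarSq 10 5678) (lunarSq 10 12348) = lunarSq 10 15678
    rw [sq_5678, sq_12348, sq_15678, ad_5566778_112233448]
  · show lunarAdd 10 (lunarSq 10 6689) (lunarSq 10 22458) = lunarSq 10 26689
    rw [sq_6689, sq_22458, sq_26689, ad_6666889_222244558]
end
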